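/- arXiv:2510.01492 — 3 statements merged into one kernel-verified Lean document; each statement's English description precedes it below -/
import Mathlib

section
/- Let V : ℝ^d → ℝ be differentiable with L-Lipschitz gradient, and let α > 0, β > 0, θ ∈ ℝ^d, ξ ∈ ℝ^d satisfy V(θ) ≤ 0 and α V(θ) + ∇V(θ)ᵀξ + (β/2)‖ξ‖² ≤ 0. If 0 ≤ h ≤ min{1/α, β/L}, then V(θ + h ξ) ≤ 0. (One step of the discretized robust safe gradient flow preserves safety.) -/
/-! The descent lemma for a function with L-Lipschitz gradient gives
V(θ + hξ) ≤ V θ + h⟪∇V θ, ξ⟫ + (L h²/2)‖ξ‖². Inserting the constraint multiplied by h bounds the right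
side by (1 - hα) V θ + (h/2)(hL - β)‖ξ‖², and both terms are nonpositive when h ≤ min(1/α, β/L). -/

open InnerProductSpace

theorem le_add_fderiv_add_of_lipschitz_fderiv {E : Type*} [NormedAddCommGroup E] [NormedSpace ℝ E]
    {f : E → ℝ} {f' : E → E →L[ℝ] ℝ} (hf : ∀ x, HasFDerivAt f (f' x) x) {L : ℝ}
    (hlip : ∀ x y, ‖f' x - f' y‖ ≤ L * ‖x - y‖) (x y : E) :
    f (x + y) ≤ f x + f' x y + L / 2 * ‖y‖ ^ 2 := by
  -- f on the segment minus its quadratic upper model; the Lipschitz bound makes it antitone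
  set ψ : ℝ → ℝ := fun t => f (x + t • y) - t * f' x y - L / 2 * t ^ 2 * ‖y‖ ^ 2
  set ψ' : ℝ → ℝ := fun t => (f' (x + t • y) - f' x) y - L * t * ‖y‖ ^ 2
  have hψ : ∀ t, HasDerivAt ψ (ψ' t) t := by
    intro t
    have hline : HasDerivAt (fun t : ℝ => x + t • y) y t := by
      simpa using ((hasDerivAt_id t).smul_const y).const_add x
    refine ((((hf _).comp_hasDerivAt t hline).sub ((hasDerivAt_id t).mul_const (f' x y))).sub
      (((hasDerivAt_pow 2 t).const_mul (L / 2)).mul_const (‖y‖ ^ 2))).congr_deriv ?_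
    simp only [ψ', sub_apply]
    ring
  have hψ'_nonpos : ∀ t ∈ interior (Set.Ici (0 : ℝ)), ψ' t ≤ 0 := by
    intro t ht
    have ht : 0 ≤ t := (interior_Ici.subset ht).le
    refine sub_nonpos.mpr ?_
    calc (f' (x + t • y) - f' x) y ≤ ‖f' (x + t • y) - f' x‖ * ‖y‖ :=
          (Real.le_norm_self _).trans (ContinuousLinearMap.le_opNorm _ _)
      _ ≤ L * ‖t • y‖ * ‖y‖ := by
          gcongr
          simpa using hlip (x + t • y) x
      _ = L * t * ‖y‖ ^ 2 := by rw [norm_smul, Real.norm_of_nonneg ht]; ring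
  have hψ_anti : AntitoneOn ψ (Set.Ici 0) :=
    antitoneOn_of_hasDerivWithinAt_nonpos (convex_Ici 0)
      (fun t _ => (hψ t).continuousAt.continuousWithinAt)
      (fun t _ => (hψ t).hasDerivWithinAt) hψ'_nonpos
  have := hψ_anti Set.self_mem_Ici (Set.mem_Ici.mpr zero_le_one) zero_le_one
  simp only [ψ, zero_smul, one_smul, add_zero, zero_mul, one_mul] at this
  linarith

theorem le_add_inner_add_of_lipschitz_gradient {E : Type*} [NormedAddCommGroup E]
    [InnerProductSpace ℝ E] [CompleteSpace E] {f : E → ℝ} {g : E → E}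
    (hf : ∀ x, HasGradientAt f (g x) x) {L : ℝ} (hlip : ∀ x y, ‖g x - g y‖ ≤ L * ‖x - y‖)
    (x y : E) : f (x + y) ≤ f x + ⟪g x, y⟫_ℝ + L / 2 * ‖y‖ ^ 2 :=
  le_add_fderiv_add_of_lipschitz_fderiv (fun x => (hf x).hasFDerivAt)
    (fun x y => by rw [← map_sub, LinearIsometryEquiv.norm_map]; exact hlip x y) x y

theorem rsgf_step_safe_general {d : ℕ}
    (V : EuclideanSpace ℝ (Fin d) → ℝ) (g : EuclideanSpace ℝ (Fin d) → EuclideanSpace ℝ (Fin d))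
    (hV : ∀ x, HasGradientAt V (g x) x)
    (L : ℝ) (hL : 0 < L) (hlip : ∀ x y, ‖g x - g y‖ ≤ L * ‖x - y‖)
    (α β : ℝ) (hα : 0 < α)
    (θ ξ : EuclideanSpace ℝ (Fin d))
    (hsafe : V θ ≤ 0)
    (hcon : α * V θ + ⟪g θ, ξ⟫_ℝ + β / 2 * ‖ξ‖ ^ 2 ≤ 0)
    (h : ℝ) (hh0 : 0 ≤ h) (hh : h ≤ min (1 / α) (β / L)) :
    V (θ + h • ξ) ≤ 0 := by
  have hαh : h * α ≤ 1 := (le_div_iff₀ hα).mp (hh.trans (min_le_left _ _))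
  have hLh : h * L ≤ β := (le_div_iff₀ hL).mp (hh.trans (min_le_right _ _))
  have hstep : h * ⟪g θ, ξ⟫_ℝ ≤ h * (-(α * V θ) - β / 2 * ‖ξ‖ ^ 2) :=
    mul_le_mul_of_nonneg_left (by linarith) hh0
  calc V (θ + h • ξ) ≤ V θ + h * ⟪g θ, ξ⟫_ℝ + L / 2 * (h * ‖ξ‖) ^ 2 := by
        simpa [inner_smul_right, norm_smul, abs_of_nonneg hh0] using
          le_add_inner_add_of_lipschitz_gradient hV hlip θ (h • ξ)
    _ ≤ (1 - h * α) * V θ + h / 2 * (h * L - β) * ‖ξ‖ ^ 2 := by linarith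
    _ ≤ 0 := add_nonpos
        (mul_nonpos_of_nonneg_of_nonpos (sub_nonneg.mpr hαh) hsafe)
        (mul_nonpos_of_nonpos_of_nonneg
          (mul_nonpos_of_nonneg_of_nonpos (by positivity) (sub_nonpos.mpr hLh)) (sq_nonneg _))

/-- One step of the discretized robust safe gradient flow preserves safety. -/
theorem rsgf_step_safe {d : ℕ}
    (V : EuclideanSpace ℝ (Fin d) → ℝ) (g : EuclideanSpace ℝ (Fin d) → EuclideanSpace ℝ (Fin d))
    (hV : ∀ x, HasGradientAt V (g x) x)
    (L : ℝ) (hL : 0 < L) (hlip : ∀ x y, ‖g x - g y‖ ≤ L * ‖x - y‖)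
    (α β : ℝ) (hα : 0 < α) (hβ : 0 < β)
    (θ ξ : EuclideanSpace ℝ (Fin d))
    (hsafe : V θ ≤ 0)
    (hcon : α * V θ + ⟪g θ, ξ⟫_ℝ + β / 2 * ‖ξ‖ ^ 2 ≤ 0)
    (h : ℝ) (hh0 : 0 ≤ h) (hh : h ≤ min (1 / α) (β / L)) :
    V (θ + h • ξ) ≤ 0 :=
  rsgf_step_safe_general V g hV L hL hlip α β hα θ ξ hsafe hcon h hh0 hh
end

section
/- Let g_0, ..., g_q ∈ ℝ^d, v_1, ..., v_q ∈ ℝ, u_1, ..., u_q ≥ 0, α > 0, β > 0, and let ξ = -(g_0 + ∑_j u_j g_j)/(1 + β ∑_j u_j). Suppose complementary slackness holds: u_j (α v_j + g_jᵀξ + (β/2)‖ξ‖²) = 0 for all j. Then g_0ᵀξ = -(1 + (β/2) ∑_j u_j) ‖ξ‖² + α ∑_j u_j v_j. In particular, if v_j ≤ 0 for all j, then g_0ᵀξ ≤ 0. -/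
open InnerProductSpace

/-- Inner product identity from complementary slackness. -/
theorem inner_g0_xi_identity {d q : ℕ}
    (g0 : EuclideanSpace ℝ (Fin d)) (g : Fin q → EuclideanSpace ℝ (Fin d))
    (v u : Fin q → ℝ) (hu : ∀ j, 0 ≤ u j) (α β : ℝ) (hα : 0 < α) (hβ : 0 < β)
    (ξ : EuclideanSpace ℝ (Fin d))
    (hξ : ξ = -(1 / (1 + β * ∑ j, u j)) • (g0 + ∑ j, u j • g j))
    (hcs : ∀ j, u j * (α * v j + ⟪g j, ξ⟫_ℝ + β / 2 * ‖ξ‖ ^ 2) = 0) :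
    ⟪g0, ξ⟫_ℝ = -(1 + β / 2 * ∑ j, u j) * ‖ξ‖ ^ 2 + α * ∑ j, u j * v j
      ∧ ((∀ j, v j ≤ 0) → ⟪g0, ξ⟫_ℝ ≤ 0) := by
  set S := ∑ j, u j with hSdef
  have hS : 0 ≤ S := Finset.sum_nonneg fun j _ => hu j
  have hpos : 0 < 1 + β * S := by nlinarith
  have hw : g0 + ∑ j, u j • g j = (-(1 + β * S)) • ξ := by
    rw [hξ, smul_smul]
    have : (-(1 + β * S)) * -(1 / (1 + β * S)) = 1 := by
      field_simp
    rw [this, one_smul]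
  have hinner : ⟪g0, ξ⟫_ℝ + ∑ j, u j * ⟪g j, ξ⟫_ℝ = -(1 + β * S) * ‖ξ‖ ^ 2 := by
    have h1 : ⟪g0 + ∑ j, u j • g j, ξ⟫_ℝ = ⟪g0, ξ⟫_ℝ + ∑ j, u j * ⟪g j, ξ⟫_ℝ := by
      rw [inner_add_left, sum_inner]
      simp only [real_inner_smul_left]
    have h2 : ⟪(-(1 + β * S)) • ξ, ξ⟫_ℝ = -(1 + β * S) * ‖ξ‖ ^ 2 := by
      rw [real_inner_smul_left, real_inner_self_eq_norm_sq, sq]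
    rw [← h1, hw, h2]
  have hsum : ∑ j, u j * (α * v j + ⟪g j, ξ⟫_ℝ + β / 2 * ‖ξ‖ ^ 2) = 0 :=
    Finset.sum_eq_zero fun j _ => hcs j
  have hsum' : α * ∑ j, u j * v j + ∑ j, u j * ⟪g j, ξ⟫_ℝ
      + β / 2 * ‖ξ‖ ^ 2 * S = 0 := by
    rw [← hsum, Finset.mul_sum, Finset.mul_sum, ← Finset.sum_add_distrib,
      ← Finset.sum_add_distrib]
    exact Finset.sum_congr rfl fun j _ => by ring
  have hmain : ⟪g0, ξ⟫_ℝ = -(1 + β / 2 * S) * ‖ξ‖ ^ 2 + α * ∑ j, u j * v j := by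
    nlinarith [hinner, hsum']
  refine ⟨hmain, fun hv => ?_⟩
  have h1 : α * ∑ j, u j * v j ≤ 0 := by
    have : ∑ j, u j * v j ≤ 0 :=
      Finset.sum_nonpos fun j _ => mul_nonpos_of_nonneg_of_nonpos (hu j) (hv j)
    nlinarith
  have h2 : 0 ≤ (1 + β / 2 * S) * ‖ξ‖ ^ 2 := by positivity
  rw [hmain]; nlinarith
end

section
/- Let V(θ) = ‖θ‖² - C with C > 0, and let α > 0, β > 0, θ ∈ ℝ^d with ‖θ‖² ≤ C, and ξ ∈ ℝ^d satisfying α(‖θ‖² - C) + 2θᵀξ + (β/2)‖ξ‖² ≤ 0. If 0 ≤ h ≤ min{1/α, β/2}, then ‖θ + hξ‖² ≤ C. -/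
open InnerProductSpace

/-- Safety preservation for the norm-ball constraint. -/
theorem norm_ball_step_safe {d : ℕ}
    (C α β : ℝ) (hC : 0 < C) (hα : 0 < α) (hβ : 0 < β)
    (θ ξ : EuclideanSpace ℝ (Fin d))
    (hθ : ‖θ‖ ^ 2 ≤ C)
    (hcon : α * (‖θ‖ ^ 2 - C) + 2 * ⟪θ, ξ⟫_ℝ + β / 2 * ‖ξ‖ ^ 2 ≤ 0)
    (h : ℝ) (hh0 : 0 ≤ h) (hh : h ≤ min (1 / α) (β / 2)) :
    ‖θ + h • ξ‖ ^ 2 ≤ C := by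
  have hβ2 : h ≤ β / 2 := le_trans hh (min_le_right _ _)
  have h1 : h * α ≤ 1 := by
    have := le_trans hh (min_le_left (1/α) (β/2))
    rwa [le_div_iff₀ hα] at this
  have expand : ‖θ + h • ξ‖ ^ 2 = ‖θ‖ ^ 2 + 2 * (h * ⟪θ, ξ⟫_ℝ) + h ^ 2 * ‖ξ‖ ^ 2 := by
    rw [norm_add_sq_real, real_inner_smul_right, norm_smul, Real.norm_eq_abs,
      abs_of_nonneg hh0]
    ring
  nlinarith [sq_nonneg ‖ξ‖, mul_nonneg hh0 (sq_nonneg ‖ξ‖), sq_nonneg h,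
    mul_nonneg hh0 (mul_nonneg hα.le (sub_nonneg.mpr hθ)),
    mul_nonneg (mul_nonneg hh0 hh0) (sq_nonneg ‖ξ‖)]
end
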